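/- Augmented ε-constraint correctness: if x* minimizes f₁(x) − δ·s over feasible pairs (x, s) with s ≥ 0 and f₂(x) + s = ε, where δ > 0, then x* is Pareto optimal for minimizing (f₁, f₂) over X. -/
import Mathlib

/-- Augmented ε-constraint correctness: if `x*` minimizes `f₁ x - δ * s` over feasible
pairs `(x, s)` with `s ≥ 0` and `f₂ x + s = ε`, where `δ > 0`, then `x*` is Pareto optimal. -/
theorem augmented_eps_constraint_is_pareto {X : Type*} (f₁ f₂ : X → ℝ) (ε δ : ℝ)
    (hδ : 0 < δ) (xs : X) (ss : ℝ) (hss : 0 ≤ ss) (hfeas : f₂ xs + ss = ε)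
    (hopt : ∀ (y : X) (s : ℝ), 0 ≤ s → f₂ y + s = ε → f₁ xs - δ * ss ≤ f₁ y - δ * s) :
    ¬ ∃ y : X, f₁ y ≤ f₁ xs ∧ f₂ y ≤ f₂ xs ∧ (f₁ y < f₁ xs ∨ f₂ y < f₂ xs) := by
  rintro ⟨y, h1, h2, h3⟩
  have key := hopt y (ε - f₂ y) (by linarith) (by ring)
  rcases h3 with h | h <;> nlinarith
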